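/- arXiv:math-ph/0103037 — 7 statements merged into one kernel-verified Lean document; each statement's English description precedes it below -/
import Mathlib

section
/- Let g(s) = (e^s − 1)/s for s ≠ 0, extended by g(0) = 1, so that g is an entire function with power series g(s) = ∑_{j=0}^∞ s^j/(j+1)!. Then for every integer j ≥ 0 and every real number s, the j-th derivative satisfies g^{(j)}(s) > 0. -/
/-!
`g` is the moment-generating function of the uniform distribution on `[0, 1]`, so its `j`-th
derivative at `s` is the moment `∫₀¹ xʲ eˢˣ dx`, the integral of a function positive on `(0, 1]`.
-/

open MeasureTheory ProbabilityTheory Set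

/-- `g(s) = (e^s - 1)/s` for `s ≠ 0`, extended by `g(0) = 1`. -/
noncomputable def g (s : ℝ) : ℝ := if s = 0 then 1 else (Real.exp s - 1) / s

lemma integrableExpSet_id_restrict_of_isCompact {K : Set ℝ} (hK : IsCompact K) :
    integrableExpSet id (volume.restrict K) = univ :=
  eq_univ_of_forall fun t =>
    (show Continuous fun x : ℝ => Real.exp (t * x) by fun_prop).continuousOn.integrableOn_compact hK

lemma integral_exp_mul_eq_g (s : ℝ) : ∫ x in (0 : ℝ)..1, Real.exp (s * x) = g s := by
  rcases eq_or_ne s 0 with rfl | hs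
  · simp [g]
  · rw [intervalIntegral.integral_comp_mul_left (fun x => Real.exp x) hs, integral_exp]
    simp [g, hs, div_eq_inv_mul]

lemma g_eq_mgf : g = mgf id (volume.restrict (Icc 0 1)) := by
  ext s
  rw [mgf, integral_Icc_eq_integral_Ioc, ← intervalIntegral.integral_of_le zero_le_one]
  exact (integral_exp_mul_eq_g s).symm

lemma integral_Icc_pow_mul_exp_mul_pos {a b : ℝ} (ha : 0 ≤ a) (hab : a < b) (j : ℕ) (s : ℝ) :
    0 < ∫ x in Icc a b, x ^ j * Real.exp (s * x) := by
  rw [integral_Icc_eq_integral_Ioc, ← intervalIntegral.integral_of_le hab.le]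
  refine intervalIntegral.intervalIntegral_pos_of_pos_on ?_ (fun x hx => ?_) hab
  · exact Continuous.intervalIntegrable (by fun_prop) _ _
  · have : 0 < x := ha.trans_lt hx.1
    positivity

/-- Every derivative of `g` is strictly positive on all of `ℝ`. -/
theorem su11_iteratedDeriv_g_pos (j : ℕ) (s : ℝ) : 0 < iteratedDeriv j g s := by
  have hs : s ∈ interior (integrableExpSet id (volume.restrict (Icc (0 : ℝ) 1))) := by
    simp [integrableExpSet_id_restrict_of_isCompact isCompact_Icc]
  rw [g_eq_mgf, iteratedDeriv_mgf hs]
  exact integral_Icc_pow_mul_exp_mul_pos le_rfl zero_lt_one j s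
end

section
/- Let g(s) = (e^s − 1)/s for s ≠ 0, extended by g(0) = 1. Then for every integer j ≥ 0 and every real s > 0, the j-th derivative of g satisfies the identity g^{(j)}(−s) = (j!/s^{j+1})·[1 − e^{−s}·(1 + s/1! + s²/2! + ⋯ + s^j/j!)]. -/
/-! On `x ≠ 0`, `g^{(j)}(x) = j!/(-x)^{j+1} · (1 - e^x ∑_{k ≤ j} (-x)^k/k!)`. This holds for
`j = 0`, and differentiating it gives the same formula with `j + 1`, because the derivative of
`e^x ∑_{k ≤ j} (-x)^k/k!` telescopes to the single term `e^x (-x)^j/j!`. As `x ≠ 0` is an open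
condition, the iterated derivatives of `g` follow the formula there. -/

open Finset Nat

noncomputable def gIteratedDerivClosedForm (j : ℕ) (x : ℝ) : ℝ :=
  j ! / (-x) ^ (j + 1) * (1 - Real.exp x * ∑ k ∈ range (j + 1), (-x) ^ k / k !)

lemma hasDerivAt_exp_mul_sum_neg_pow_div_factorial (j : ℕ) (x : ℝ) :
    HasDerivAt (fun y => Real.exp y * ∑ k ∈ range (j + 1), (-y) ^ k / k !)
      (Real.exp x * (-x) ^ j / j !) x := by
  induction j with
  | zero => simpa using Real.hasDerivAt_exp x
  | succ j ih =>
    have hterm := (Real.hasDerivAt_exp x).fun_mul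
      (((hasDerivAt_neg x).fun_pow (j + 1)).div_const ((j + 1) ! : ℝ))
    simp only [sum_range_succ (fun k => _) (j + 1), mul_add]
    refine (ih.fun_add hterm).congr_deriv ?_
    push_cast [factorial_succ]
    field_simp
    ring

lemma hasDerivAt_gIteratedDerivClosedForm (j : ℕ) {x : ℝ} (hx : x ≠ 0) :
    HasDerivAt (gIteratedDerivClosedForm j) (gIteratedDerivClosedForm (j + 1) x) x := by
  have hnx : -x ≠ 0 := neg_ne_zero.2 hx
  have hfactor := (hasDerivAt_const x (j ! : ℝ)).fun_div ((hasDerivAt_neg x).fun_pow (j + 1))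
    (pow_ne_zero _ hnx)
  have hbracket := (hasDerivAt_exp_mul_sum_neg_pow_div_factorial j x).const_sub 1
  refine (hfactor.fun_mul hbracket).congr_deriv ?_
  simp only [gIteratedDerivClosedForm, sum_range_succ _ (j + 1), Nat.add_sub_cancel]
  push_cast [factorial_succ]
  field_simp
  ring

lemma iteratedDeriv_g_of_ne_zero (j : ℕ) {x : ℝ} (hx : x ≠ 0) :
    iteratedDeriv j g x = gIteratedDerivClosedForm j x := by
  induction j generalizing x with
  | zero =>
    simp only [iteratedDeriv_zero, g, if_neg hx, gIteratedDerivClosedForm, zero_add, sum_range_one,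
      pow_zero, pow_one, factorial_zero, cast_one, div_one, mul_one]
    field_simp
    ring
  | succ j ih =>
    have heq : iteratedDeriv j g =ᶠ[nhds x] gIteratedDerivClosedForm j :=
      Filter.eventually_of_mem (isOpen_ne.mem_nhds hx) fun y hy => ih hy
    rw [iteratedDeriv_succ, heq.deriv_eq]
    exact (hasDerivAt_gIteratedDerivClosedForm j hx).deriv

/-- For `s > 0`,
`g^{(j)}(-s) = (j!/s^{j+1}) ⬝ [1 - e^{-s}(1 + s/1! + s²/2! + ⋯ + s^j/j!)]`. -/
theorem su11_iteratedDeriv_g_neg_formula (j : ℕ) (s : ℝ) (hs : 0 < s) :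
    iteratedDeriv j g (-s) =
      ((j.factorial : ℝ) / s ^ (j + 1)) *
        (1 - Real.exp (-s) * ∑ k ∈ Finset.range (j + 1), s ^ k / (k.factorial : ℝ)) := by
  rw [iteratedDeriv_g_of_ne_zero j (neg_ne_zero.2 hs.ne'), gIteratedDerivClosedForm]
  simp only [neg_neg]
end

section
/- Fix an integer L ≥ 1 and a real number s. With ℱ_{N,L}(x) = ∑_{m=0}^{N} C(m+L−1, m) x^m, one has lim_{N→∞} (L−1)!·N^{−L}·ℱ_{N,L}(1 + s/N) = g^{(L−1)}(s). -/
/-- `ℱ_{N,L}(x) = ∑_{m=0}^N C(m+L-1, m) x^m`. -/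
noncomputable def F (L N : ℕ) (x : ℝ) : ℝ :=
  ∑ m ∈ Finset.range (N + 1), (Nat.choose (m + L - 1) m : ℝ) * x ^ m

open Filter Finset Topology Asymptotics FormalMultilinearSeries

section PowerSeries

variable {𝕜 : Type*} [NontriviallyNormedField 𝕜] [CompleteSpace 𝕜] {c d : ℕ → 𝕜}

lemma hasSum_ofScalarsSum (hc : (ofScalars 𝕜 c).radius = ⊤) (x : 𝕜) :
    HasSum (fun n => c n * x ^ n) (ofScalarsSum (E := 𝕜) c x) := by
  have := ((ofScalars 𝕜 c).summable (x := x) (by simp [hc])).hasSum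
  simpa [ofScalars_apply_eq, mul_comm, ofScalarsSum_eq_tsum] using this

lemma deriv_ofScalarsSum (hc : (ofScalars 𝕜 c).radius = ⊤)
    (hd : ∀ n, (n + 1) * c (n + 1) = d n) : deriv (ofScalarsSum (E := 𝕜) c) = ofScalarsSum d := by
  funext x
  have hx : ‖x‖ₑ < (ofScalars 𝕜 c).radius := by simp [hc]
  have hsum := ((ofScalars 𝕜 c).derivSeries.summable (x := x)
    (by simpa using hx.trans_le (radius_le_radius_derivSeries _))).hasSum
  have hderiv := (ContinuousLinearMap.apply 𝕜 𝕜 (1 : 𝕜)).hasSum hsum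
  rw [← fderiv_apply_one_eq_deriv, ofScalarsSum, FormalMultilinearSeries.fderiv_sum hx]
  refine (hderiv.congr_fun fun n => ?_).tsum_eq.symm.trans (ofScalars_sum_eq d x).symm
  simp [← hd, mul_comm]

end PowerSeries

noncomputable def gDerivCoeff (k n : ℕ) : ℝ := 1 / (n.factorial * (n + k + 1))

lemma gDerivCoeff_pos (k n : ℕ) : 0 < gDerivCoeff k n := by
  unfold gDerivCoeff; positivity

lemma gDerivCoeff_le (k n : ℕ) : gDerivCoeff k n ≤ 1 / n.factorial :=
  one_div_le_one_div_of_le (by positivity)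
    (le_mul_of_one_le_right (by positivity) (by linarith [k.cast_nonneg (α := ℝ)]))

lemma radius_ofScalars_gDerivCoeff (k : ℕ) : (ofScalars ℝ (gDerivCoeff k)).radius = ⊤ := by
  refine radius_eq_top_of_summable_norm _ fun r => ?_
  refine (Real.summable_pow_div_factorial r).of_nonneg_of_le (fun n => by positivity) fun n => ?_
  rw [ofScalars_norm, Real.norm_of_nonneg (gDerivCoeff_pos k n).le, mul_comm, div_eq_mul_one_div]
  gcongr
  exact gDerivCoeff_le k n

lemma succ_mul_gDerivCoeff_succ (k n : ℕ) :
    (n + 1 : ℝ) * gDerivCoeff k (n + 1) = gDerivCoeff (k + 1) n := by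
  simp only [gDerivCoeff, Nat.factorial_succ]
  push_cast
  field_simp
  ring

lemma g_eq_ofScalarsSum : g = ofScalarsSum (gDerivCoeff 0) := by
  funext x
  rcases eq_or_ne x 0 with rfl | hx
  · simp [g, gDerivCoeff, ofScalarsSum_zero]
  have hexp : HasSum (fun n => x ^ (n + 1) / (n + 1).factorial) (Real.exp x - 1) := by
    have := (hasSum_nat_add_iff' 1).mpr (Real.exp_eq_exp_ℝ ▸ NormedSpace.expSeries_div_hasSum_exp x)
    simpa using this
  have hmul := (hasSum_ofScalarsSum (radius_ofScalars_gDerivCoeff 0) x).mul_left x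
  have key : x * ofScalarsSum (gDerivCoeff 0) x = Real.exp x - 1 := by
    refine hmul.unique (hexp.congr_fun fun n => ?_)
    simp only [gDerivCoeff, Nat.factorial_succ, pow_succ]
    push_cast
    field_simp
    ring
  rw [g, if_neg hx, ← key, mul_div_cancel_left₀ _ hx]

lemma iteratedDeriv_g (k : ℕ) : iteratedDeriv k g = ofScalarsSum (gDerivCoeff k) := by
  induction k with
  | zero => rw [iteratedDeriv_zero, g_eq_ofScalarsSum]
  | succ k ih =>
    rw [iteratedDeriv_succ, ih,
      deriv_ofScalarsSum (radius_ofScalars_gDerivCoeff k) (succ_mul_gDerivCoeff_succ k)]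

lemma hasSum_iteratedDeriv_g (k : ℕ) (s : ℝ) :
    HasSum (fun n => gDerivCoeff k n * s ^ n) (iteratedDeriv k g s) :=
  iteratedDeriv_g k ▸ hasSum_ofScalarsSum (radius_ofScalars_gDerivCoeff k) s

lemma sum_range_add_choose_add (N K j : ℕ) :
    ∑ m ∈ range (N + 1), (m + K).choose (K + j) = (N + K + 1).choose (K + j + 1) := by
  induction N with
  | zero => cases j <;> simp [Nat.choose_eq_zero_of_lt]
  | succ N ih =>
    rw [sum_range_succ, ih, add_right_comm N 1 K, Nat.choose_succ_succ' (N + K + 1), add_comm]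

lemma sum_range_add_choose_mul_choose (N K j : ℕ) :
    ∑ m ∈ range (N + 1), (m + K).choose K * m.choose j
      = (K + j).choose j * (N + K + 1).choose (K + j + 1) := by
  have revision (m : ℕ) :
      (m + K).choose K * m.choose j = (m + K).choose (K + j) * (K + j).choose j := by
    rw [← Nat.choose_symm_add (a := K), Nat.choose_mul (Nat.le_add_right K j), Nat.add_sub_cancel,
      Nat.add_sub_cancel_left]
  rw [sum_congr rfl fun m _ => revision m, ← sum_mul, sum_range_add_choose_add, mul_comm]

lemma one_add_pow_eq_sum_range {m : ℕ} (N : ℕ) (hm : m ≤ N) (u : ℝ) :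
    (1 + u) ^ m = ∑ j ∈ range (N + 1), (m.choose j : ℝ) * u ^ j := by
  rw [add_comm, add_pow]
  refine sum_subset (range_subset_range.mpr (by omega)) (fun j _ hj => ?_) |>.trans
    (sum_congr rfl fun j _ => by ring)
  rw [Nat.choose_eq_zero_of_lt (by simpa using hj)]
  simp

lemma F_succ_one_add (K N : ℕ) (u : ℝ) :
    F (K + 1) N (1 + u) = ∑ j ∈ range (N + 1),
      ((K + j).choose j * (N + K + 1).choose (K + j + 1) : ℕ) * u ^ j := by
  simp_rw [← sum_range_add_choose_mul_choose, Nat.cast_sum, sum_mul]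
  rw [sum_comm, F]
  refine sum_congr rfl fun m hm => ?_
  rw [← add_assoc, Nat.add_sub_cancel, Nat.choose_symm_add,
    one_add_pow_eq_sum_range N (by simpa [Nat.lt_succ_iff] using hm), mul_sum]
  refine sum_congr rfl fun j _ => ?_
  push_cast; ring

lemma tendsto_choose_add_div_pow (c k : ℕ) :
    Tendsto (fun N : ℕ => ((N + c).choose k : ℝ) / (N : ℝ) ^ k) atTop (𝓝 (1 / k.factorial)) := by
  have hshift : (fun N : ℕ => (N : ℝ)) ~[atTop] fun N => ((N + c : ℕ) : ℝ) := by
    refine (isEquivalent_iff_tendsto_one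
      (eventually_ne_atTop 0 |>.mono fun N hN => by positivity)).2 ?_
    simpa [Pi.div_def] using tendsto_natCast_div_add_atTop (c : ℝ)
  have hchoose :
      (fun N : ℕ => ((N + c).choose k : ℝ)) ~[atTop] fun N => (N : ℝ) ^ k / k.factorial :=
    ((isEquivalent_choose k).comp_tendsto (tendsto_add_atTop_nat c)).trans
      ((hshift.symm.pow k).div IsEquivalent.refl)
  refine (hchoose.div IsEquivalent.refl).symm.tendsto_nhds (tendsto_const_nhds.congr' ?_)
  filter_upwards [eventually_ne_atTop 0] with N hN
  simp only [Pi.div_apply]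
  field_simp

lemma factorial_mul_choose_succ_le_pow (n k : ℕ) : k.factorial * n.choose (k + 1) ≤ n ^ (k + 1) :=
  calc k.factorial * n.choose (k + 1) ≤ (k + 1).factorial * n.choose (k + 1) :=
        Nat.mul_le_mul_right _ (Nat.factorial_le k.le_succ)
    _ = n.descFactorial (k + 1) := (Nat.descFactorial_eq_factorial_mul_choose _ _).symm
    _ ≤ n ^ (k + 1) := Nat.descFactorial_le_pow _ _

noncomputable def scaledFTerm (K : ℕ) (s : ℝ) (N j : ℕ) : ℝ :=
  ((K + j).factorial / j.factorial : ℝ) * (N + K + 1).choose (K + j + 1) / (N : ℝ) ^ (K + j + 1)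
    * s ^ j

lemma tendsto_scaledFTerm (K : ℕ) (s : ℝ) (j : ℕ) :
    Tendsto (fun N => scaledFTerm K s N j) atTop (𝓝 (gDerivCoeff K j * s ^ j)) := by
  have h := ((tendsto_choose_add_div_pow (K + 1) (K + j + 1)).const_mul
    ((K + j).factorial / j.factorial : ℝ)).mul_const (s ^ j)
  convert h using 2 with N
  · simp only [scaledFTerm, ← add_assoc, mul_div_assoc]
  · simp only [gDerivCoeff, Nat.factorial_succ]
    push_cast
    field_simp
    ring

lemma abs_scaledFTerm_le (K : ℕ) (s : ℝ) {N : ℕ} (hN : K + 1 ≤ N) (j : ℕ) :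
    |scaledFTerm K s N j| ≤ 2 ^ (K + 1) * (2 * |s|) ^ j / j.factorial := by
  have hN0 : (0 : ℝ) < N := by exact_mod_cast (by omega : 0 < N)
  have hchoose :
      ((K + j).factorial * (N + K + 1).choose (K + j + 1) : ℝ) ≤ (2 * N) ^ (K + j + 1) :=
    calc ((K + j).factorial * (N + K + 1).choose (K + j + 1) : ℝ)
        ≤ ((N + K + 1 : ℕ) : ℝ) ^ (K + j + 1) := mod_cast factorial_mul_choose_succ_le_pow _ _
      _ ≤ (2 * N) ^ (K + j + 1) := by gcongr; exact_mod_cast (by omega : N + K + 1 ≤ 2 * N)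
  rw [scaledFTerm, abs_mul, abs_pow, abs_of_nonneg (by positivity)]
  calc (K + j).factorial / j.factorial * ((N + K + 1).choose (K + j + 1) : ℝ) / N ^ (K + j + 1)
        * |s| ^ j
      = (K + j).factorial * (N + K + 1).choose (K + j + 1) / N ^ (K + j + 1) * |s| ^ j
        / j.factorial := by ring
    _ ≤ (2 * N) ^ (K + j + 1) / N ^ (K + j + 1) * |s| ^ j / j.factorial := by gcongr
    _ = 2 ^ (K + 1) * (2 * |s|) ^ j / j.factorial := by
      field_simp
      ring

lemma sum_scaledFTerm (K : ℕ) (s : ℝ) {N : ℕ} (hN : N ≠ 0) :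
    (K.factorial : ℝ) / (N : ℝ) ^ (K + 1) * F (K + 1) N (1 + s / N)
      = ∑' j, scaledFTerm K s N j := by
  rw [tsum_eq_sum (s := range (N + 1)) fun j hj => ?_, F_succ_one_add, mul_sum]
  · refine sum_congr rfl fun j _ => ?_
    have hfac : ((K + j).choose j * K.factorial * j.factorial : ℝ) = (K + j).factorial := by
      exact_mod_cast Nat.add_choose_mul_factorial_mul_factorial K j
    have hN' : (N : ℝ) ≠ 0 := Nat.cast_ne_zero.mpr hN
    rw [scaledFTerm, ← hfac, div_pow]
    push_cast
    field_simp
    ring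
  · rw [scaledFTerm, Nat.choose_eq_zero_of_lt (by simp only [mem_range, not_lt] at hj; omega)]
    simp

/-- `(L-1)! N^{-L} ℱ_{N,L}(1 + s/N) → g^{(L-1)}(s)` as `N → ∞`. -/
theorem su11_F_asymptotics (L : ℕ) (hL : 1 ≤ L) (s : ℝ) :
    Filter.Tendsto
      (fun N : ℕ => ((L - 1).factorial : ℝ) / (N : ℝ) ^ L * F L N (1 + s / N))
      Filter.atTop (nhds (iteratedDeriv (L - 1) g s)) := by
  obtain ⟨K, rfl⟩ : ∃ K, L = K + 1 := ⟨L - 1, by omega⟩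
  rw [Nat.add_sub_cancel, ← (hasSum_iteratedDeriv_g K s).tsum_eq]
  have hbound : Summable fun j : ℕ => 2 ^ (K + 1) * (2 * |s|) ^ j / j.factorial := by
    simpa [mul_div_assoc] using (Real.summable_pow_div_factorial (2 * |s|)).mul_left (2 ^ (K + 1))
  refine (tendsto_tsum_of_dominated_convergence hbound (tendsto_scaledFTerm K s) ?_).congr' ?_
  · filter_upwards [eventually_ge_atTop (K + 1)] with N hN j
    exact (Real.norm_eq_abs _).trans_le (abs_scaledFTerm_le K s hN j)
  · filter_upwards [eventually_ne_atTop 0] with N hN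
    exact (sum_scaledFTerm K s hN).symm
end

section
/- Fix an integer L ≥ 1 and define P(s) = g^{(L)}(s)/g^{(L−1)}(s). Then P has the following asymptotics at −∞: there exist constants C > 0 and s₀ > 0 such that for all s ≤ −s₀, | P(s) + L/s | ≤ C·(−s)^{L−1}·e^{s}. -/
/-! Differentiating `s g(s) = e^s - 1` repeatedly gives, for `s ≠ 0`,
`s g^{(n+1)}(s) = e^s - (n+1) g^{(n)}(s)`, hence `P(s) + L/s = e^s / (s g^{(L-1)}(s))`.
The same recursion shows by induction that `(-s)^{n+1} g^{(n)}(s) → n!` as `s → -∞`, so the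
denominator is eventually at least `(L-1)!/2 · (-s)^{1-L}` in absolute value. -/

open Filter Topology Real
open scoped Nat

noncomputable def gDeriv : ℕ → ℝ → ℝ
  | 0 => fun s => (exp s - 1) / s
  | n + 1 => fun s => (exp s - (n + 1) * gDeriv n s) / s

lemma mul_gDeriv_succ (n : ℕ) {s : ℝ} (hs : s ≠ 0) :
    s * gDeriv (n + 1) s = exp s - (n + 1) * gDeriv n s := by
  simp only [gDeriv]
  field_simp

lemma hasDerivAt_gDeriv :
    ∀ (n : ℕ) {s : ℝ}, s ≠ 0 → HasDerivAt (gDeriv n) (gDeriv (n + 1) s) s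
  | 0, s, hs => by
    refine (((hasDerivAt_exp s).sub_const 1).div (hasDerivAt_id' s) hs).congr_deriv ?_
    simp only [gDeriv]
    field_simp
    ring
  | n + 1, s, hs => by
    refine (((hasDerivAt_exp s).sub ((hasDerivAt_gDeriv n hs).const_mul ((n : ℝ) + 1))).div
      (hasDerivAt_id' s) hs).congr_deriv ?_
    simp only [Pi.sub_apply]
    rw [← mul_gDeriv_succ n hs, show gDeriv (n + 2) s =
      (exp s - ((n + 1 : ℕ) + 1) * gDeriv (n + 1) s) / s from rfl]
    push_cast
    field_simp
    ring

lemma iteratedDeriv_g_of_neg (n : ℕ) {s : ℝ} (hs : s < 0) :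
    iteratedDeriv n g s = gDeriv n s := by
  induction n generalizing s with
  | zero => simp [g, gDeriv, hs.ne]
  | succ n ih =>
    have hev : iteratedDeriv n g =ᶠ[𝓝 s] gDeriv n :=
      eventually_of_mem (Iio_mem_nhds hs) fun x hx => ih hx
    rw [iteratedDeriv_succ, hev.deriv_eq, (hasDerivAt_gDeriv n hs.ne).deriv]

lemma tendsto_pow_mul_gDeriv_atBot (n : ℕ) :
    Tendsto (fun s => (-s) ^ (n + 1) * gDeriv n s) atBot (𝓝 (n ! : ℝ)) := by
  have hexp (k : ℕ) : Tendsto (fun s : ℝ => (-s) ^ k * exp s) atBot (𝓝 0) := by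
    refine ((tendsto_pow_mul_exp_neg_atTop_nhds_zero k).comp tendsto_neg_atBot_atTop).congr ?_
    simp
  induction n with
  | zero =>
    have hlim : Tendsto (fun s : ℝ => 1 - (-s) ^ 0 * exp s) atBot (𝓝 (1 - 0)) :=
      tendsto_const_nhds.sub (hexp 0)
    refine (hlim.congr' ?_).trans (by simp)
    filter_upwards [eventually_lt_atBot 0] with s hs
    simp only [gDeriv, zero_add, pow_one]
    field_simp [hs.ne]
    ring
  | succ n ih =>
    have hlim := (ih.const_mul ((n : ℝ) + 1)).sub (hexp (n + 1))
    rw [sub_zero, ← Nat.cast_succ, ← Nat.cast_mul, ← Nat.factorial_succ] at hlim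
    refine hlim.congr' ?_
    filter_upwards [eventually_lt_atBot 0] with s hs
    push_cast
    linear_combination (-s) ^ (n + 1) * mul_gDeriv_succ n hs.ne

lemma gDeriv_succ_div_add (n : ℕ) {s : ℝ} (hs : s ≠ 0) (hg : gDeriv n s ≠ 0) :
    gDeriv (n + 1) s / gDeriv n s + (n + 1) / s = exp s / (s * gDeriv n s) := by
  have := mul_gDeriv_succ n hs
  field_simp
  linear_combination this

/-- Asymptotics of `P(s) = g^{(L)}(s)/g^{(L-1)}(s)` at `-∞`:
`P(s) = -L/s + O((-s)^{L-1} e^s)`. -/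
theorem su11_P_asymptotics_neg_infty (L : ℕ) (hL : 1 ≤ L) :
    ∃ C > 0, ∃ s₀ > (0 : ℝ), ∀ s : ℝ, s ≤ -s₀ →
      |iteratedDeriv L g s / iteratedDeriv (L - 1) g s + (L : ℝ) / s| ≤
        C * (-s) ^ (L - 1) * Real.exp s := by
  obtain ⟨n, rfl⟩ : ∃ n, L = n + 1 := ⟨L - 1, by omega⟩
  have hfac : (0 : ℝ) < n ! := by positivity
  obtain ⟨a, ha⟩ := eventually_atBot.1 <|
    (tendsto_pow_mul_gDeriv_atBot n).eventually (eventually_ge_nhds (half_lt_self hfac))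
  refine ⟨2 / n !, by positivity, max 1 (-a), by positivity, fun s hs => ?_⟩
  have hs0 : s < 0 := by linarith [le_max_left 1 (-a)]
  have hbound := ha s (by linarith [le_max_right 1 (-a)])
  have hu : 0 < -s := neg_pos.2 hs0
  have hg : 0 < gDeriv n s :=
    pos_of_mul_pos_right (a := (-s) ^ (n + 1)) (by linarith) (by positivity)
  push_cast
  rw [iteratedDeriv_g_of_neg _ hs0, iteratedDeriv_g_of_neg _ hs0,
    gDeriv_succ_div_add n hs0.ne hg.ne', abs_div, abs_of_pos (exp_pos s), abs_mul,
    abs_of_neg hs0, abs_of_pos hg, div_le_iff₀ (by positivity)]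
  have hone : 1 ≤ 2 / n ! * ((-s) ^ (n + 1) * gDeriv n s) := by
    rw [div_mul_eq_mul_div, le_div_iff₀ hfac]
    linarith
  calc exp s = exp s * 1 := (mul_one _).symm
    _ ≤ exp s * (2 / n ! * ((-s) ^ (n + 1) * gDeriv n s)) := by gcongr
    _ = _ := by ring
end

section
/- Fix an integer L ≥ 1 and a real number r with 0 < r < 1. Define the 2×2 complex matrices A₂ = [[1, 1], [1, (1−r²)^{−L}]], B₂ = [[0, 0], [L·r, L·r·(1−r²)^{−L−1}]], C₂ = [[L, L], [L, L·(1+L·r²)·(1−r²)^{−L−2}]], and Λ₂ = C₂ − B₂*·A₂^{−1}·B₂ (where B₂* is the conjugate transpose). Then the normalized two-point correlation k₂ := ((Λ₂)₁₁·(Λ₂)₂₂ + (Λ₂)₁₂·(Λ₂)₂₁)·(1−r²)² / (L²·det A₂) equals [ (1−r²)^{3L+2} + ((L²−2L−2)r⁴ + (4L+4)r² − 1)·(1−r²)^{2L} + ((L+1)²r⁴ − (4L+2)r² − 1)·(1−r²)^{L} + 1 ] / (1 − (1−r²)^L)³. -/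
open Matrix

/-!
With `a = (1 - r²)⁻ᴸ`, the matrix `A₂ = !![1, 1; 1, a]` has inverse `(a - 1)⁻¹ • !![a, -1; -1, 1]`,
and since the first row of `B₂` vanishes, `B₂ᴴ A₂⁻¹ B₂ = (a - 1)⁻¹ • v vᴴ` with `v` the (real)
second row of `B₂`. Writing `y = (1 - r²)ᴸ`, the claim becomes a rational identity in `r`, `y`
and `L`, which holds after clearing the denominators `L`, `y`, `1 - r²` and `1 - y`.
-/

section
variable {K : Type*} [Field K]

theorem inv_fin_two_of_one_one (a : K) :
    (!![1, 1; 1, a] : Matrix (Fin 2) (Fin 2) K)⁻¹ = (a - 1)⁻¹ • !![a, -1; -1, 1] := by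
  rw [inv_def, det_fin_two_of, adjugate_fin_two_of, Ring.inverse_eq_inv', mul_one, one_mul]

theorem conjTranspose_mul_inv_one_one_mul_fin_two_of_zero_zero [StarRing K] (a b c : K) :
    (!![0, 0; b, c] : Matrix (Fin 2) (Fin 2) K)ᴴ * (!![1, 1; 1, a])⁻¹ * !![0, 0; b, c] =
      (a - 1)⁻¹ • !![star b * b, star b * c; star c * b, star c * c] := by
  rw [inv_fin_two_of_one_one]
  ext i j
  fin_cases i <;> fin_cases j <;> simp [Matrix.mul_apply, Fin.sum_univ_two] <;> ring

theorem su11_schur_complement_rational_identity {L r y : K} (hL : L ≠ 0) (hx : 1 - r ^ 2 ≠ 0)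
    (hy : y ≠ 0) (hy1 : y ≠ 1) :
    let x := 1 - r ^ 2
    let b := L * r
    let c := L * r * (y * x)⁻¹
    let d := (y⁻¹ - 1)⁻¹
    ((L - d * (b * b)) * (L * (1 + L * r ^ 2) * (y * x ^ 2)⁻¹ - d * (c * c)) +
        (L - d * (b * c)) * (L - d * (c * b))) * x ^ 2 / (L ^ 2 * (y⁻¹ - 1)) =
      (y ^ 3 * x ^ 2 + ((L ^ 2 - 2 * L - 2) * r ^ 4 + (4 * L + 4) * r ^ 2 - 1) * y ^ 2 +
        ((L + 1) ^ 2 * r ^ 4 - (4 * L + 2) * r ^ 2 - 1) * y + 1) / (1 - y) ^ 3 := by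
  intro x b c d
  have hy1' : 1 - y ≠ 0 := sub_ne_zero.mpr (Ne.symm hy1)
  have hd : d = y / (1 - y) := by simp only [d]; field_simp
  rw [hd]
  simp only [b, c, x]
  field_simp
  ring

end

/-- The Kac–Rice computation of the normalized two-point correlation function of
zeros of the `SU(1,1)` random analytic function, at the points `z₁ = 0`, `z₂ = r`:
with `A₂, B₂, C₂` the explicit covariance matrices and `Λ₂ = C₂ - B₂ᴴ A₂⁻¹ B₂`,
the quantity `((Λ₂)₁₁(Λ₂)₂₂ + (Λ₂)₁₂(Λ₂)₂₁)(1-r²)²/(L² det A₂)` equals the explicit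
rational expression in `r` and `(1-r²)^L`. -/
theorem su11_two_point_correlation (L : ℕ) (hL : 1 ≤ L) (r : ℝ) (h0 : 0 < r) (h1 : r < 1) :
    let x : ℂ := 1 - (r : ℂ) ^ 2
    let A₂ : Matrix (Fin 2) (Fin 2) ℂ := !![1, 1; 1, (x ^ L)⁻¹]
    let B₂ : Matrix (Fin 2) (Fin 2) ℂ :=
      !![0, 0; (L : ℂ) * (r : ℂ), (L : ℂ) * (r : ℂ) * (x ^ (L + 1))⁻¹]
    let C₂ : Matrix (Fin 2) (Fin 2) ℂ :=
      !![(L : ℂ), (L : ℂ); (L : ℂ),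
         (L : ℂ) * (1 + (L : ℂ) * (r : ℂ) ^ 2) * (x ^ (L + 2))⁻¹]
    let Λ₂ : Matrix (Fin 2) (Fin 2) ℂ := C₂ - B₂ᴴ * A₂⁻¹ * B₂
    (Λ₂ 0 0 * Λ₂ 1 1 + Λ₂ 0 1 * Λ₂ 1 0) * x ^ 2 / ((L : ℂ) ^ 2 * A₂.det) =
      (x ^ (3 * L + 2) +
          (((L : ℂ) ^ 2 - 2 * L - 2) * (r : ℂ) ^ 4 + (4 * L + 4) * (r : ℂ) ^ 2 - 1) *
            x ^ (2 * L) +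
          (((L : ℂ) + 1) ^ 2 * (r : ℂ) ^ 4 - (4 * L + 2) * (r : ℂ) ^ 2 - 1) * x ^ L + 1) /
        (1 - x ^ L) ^ 3 := by
  intro x A₂ B₂ C₂ Λ₂
  have hx_pos : 0 < 1 - r ^ 2 := by nlinarith
  have hx_ofReal : x = ((1 - r ^ 2 : ℝ) : ℂ) := by push_cast; rfl
  have hx : x ≠ 0 := by rw [hx_ofReal]; exact_mod_cast hx_pos.ne'
  have hxL : x ^ L ≠ 1 := by
    rw [hx_ofReal]
    exact_mod_cast (pow_lt_one₀ hx_pos.le (by nlinarith) (by omega)).ne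
  have hB_real : star ((L : ℂ) * r) = L * r ∧
      star ((L : ℂ) * r * (x ^ (L + 1))⁻¹) = L * r * (x ^ (L + 1))⁻¹ := by
    simp [x, star_mul']
  have hdet : A₂.det = (x ^ L)⁻¹ - 1 := by simp [A₂, det_fin_two_of]
  simp only [Λ₂, B₂, A₂, C₂, conjTranspose_mul_inv_one_one_mul_fin_two_of_zero_zero, hB_real, hdet,
    Matrix.sub_apply, Matrix.smul_apply, of_apply, cons_val', cons_val_zero, cons_val_one,
    empty_val', cons_val_fin_one, smul_eq_mul]
  rw [pow_succ x L, pow_add x L 2, show x ^ (3 * L + 2) = (x ^ L) ^ 3 * x ^ 2 by ring,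
    show x ^ (2 * L) = (x ^ L) ^ 2 by ring]
  exact su11_schur_complement_rational_identity (by exact_mod_cast (by omega : L ≠ 0)) hx
    (pow_ne_zero _ hx) hxL
end

section
/- Fix an integer L ≥ 1 and let k₂^{(L)}(r) = [ (1−r²)^{3L+2} + ((L²−2L−2)r⁴ + (4L+4)r² − 1)·(1−r²)^{2L} + ((L+1)²r⁴ − (4L+2)r² − 1)·(1−r²)^{L} + 1 ] / (1 − (1−r²)^L)³ for 0 < r < 1. Then k₂^{(L)}(r) vanishes quadratically at r = 0: lim_{r→0⁺} k₂^{(L)}(r)/r² = (L+1)²/(2L). (Zeros of the SU(1,1) random analytic function exhibit quadratic repulsion at small distances.) -/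
/-!
Put `t = r²`. The denominator of `k₂` is `(t q)³` with `q = ∑_{i<L} (1-t)^i = (1 - (1-t)^L)/t`,
and writing `q = L - t ρ` for a second polynomial `ρ`, the numerator becomes `t⁴ p` for a
polynomial `p` in `t, q, ρ`. Hence `k₂ L r / r² = p / q³` evaluated at `t = r²`, a continuous
function whose value at `t = 0`, where `q = L` and `ρ = L(L-1)/2`, is `(L+1)²/(2L)`.
-/

/-- The normalized two-point correlation function of zeros of the `SU(1,1)` random
analytic function with parameter `L`, as a function of the pseudohyperbolic
distance `r`. -/
noncomputable def k₂ (L : ℕ) (r : ℝ) : ℝ :=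
  ((1 - r ^ 2) ^ (3 * L + 2) +
      (((L : ℝ) ^ 2 - 2 * L - 2) * r ^ 4 + (4 * L + 4) * r ^ 2 - 1) * (1 - r ^ 2) ^ (2 * L) +
      (((L : ℝ) + 1) ^ 2 * r ^ 4 - (4 * L + 2) * r ^ 2 - 1) * (1 - r ^ 2) ^ L + 1) /
    (1 - (1 - r ^ 2) ^ L) ^ 3

open Finset Filter Topology

section CommRing

variable {R : Type*} [CommRing R]

theorem one_sub_one_sub_pow (t : R) (n : ℕ) :
    1 - (1 - t) ^ n = t * ∑ i ∈ range n, (1 - t) ^ i := by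
  linear_combination geom_sum_mul (1 - t) n

theorem geom_sum_one_sub (t : R) (n : ℕ) :
    ∑ i ∈ range n, (1 - t) ^ i = n - t * ∑ i ∈ range n, ∑ j ∈ range i, (1 - t) ^ j := by
  have h : t * ∑ i ∈ range n, ∑ j ∈ range i, (1 - t) ^ j = ∑ i ∈ range n, (1 - (1 - t) ^ i) := by
    rw [mul_sum]
    exact sum_congr rfl fun i _ => (one_sub_one_sub_pow t i).symm
  rw [h, sum_sub_distrib, sum_const, card_range, nsmul_one]
  ring

theorem k₂_numerator_identity (ℓ t ρ q : R) (hq : q = ℓ - t * ρ) :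
    (1 - t) ^ 2 * (1 - t * q) ^ 3 +
        ((ℓ ^ 2 - 2 * ℓ - 2) * t ^ 2 + (4 * ℓ + 4) * t - 1) * (1 - t * q) ^ 2 +
        ((ℓ + 1) ^ 2 * t ^ 2 - (4 * ℓ + 2) * t - 1) * (1 - t * q) + 1 =
      t ^ 4 * (2 * ρ ^ 2 - ρ * q * (3 * ℓ - 2 - q) + (ℓ - 1) ^ 2 * q ^ 2 + 2 * q ^ 3 - t * q ^ 3) := by
  subst hq
  ring

end CommRing

namespace K₂

noncomputable def q (L : ℕ) (t : ℝ) : ℝ := ∑ i ∈ range L, (1 - t) ^ i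

noncomputable def ρ (L : ℕ) (t : ℝ) : ℝ := ∑ i ∈ range L, ∑ j ∈ range i, (1 - t) ^ j

noncomputable def p (L : ℕ) (t : ℝ) : ℝ :=
  2 * ρ L t ^ 2 - ρ L t * q L t * (3 * L - 2 - q L t) + ((L : ℝ) - 1) ^ 2 * q L t ^ 2 +
    2 * q L t ^ 3 - t * q L t ^ 3

@[fun_prop]
theorem continuous_q (L : ℕ) : Continuous (q L) := by
  unfold q; fun_prop

@[fun_prop]
theorem continuous_p (L : ℕ) : Continuous (p L) := by
  unfold p q ρ; fun_prop

theorem q_zero (L : ℕ) : q L 0 = L := by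
  simp [q]

theorem ρ_zero (L : ℕ) : 2 * ρ L 0 = L * ((L : ℝ) - 1) := by
  have h := congrArg (Nat.cast : ℕ → ℝ) (sum_range_id_mul_two L)
  rcases L with _ | L
  · simp [ρ]
  · push_cast at h ⊢
    simp only [ρ, sub_zero, one_pow, sum_const, card_range, nsmul_one]
    linarith

theorem p_zero_div_q_zero_pow (L : ℕ) (hL : L ≠ 0) :
    p L 0 / q L 0 ^ 3 = ((L : ℝ) + 1) ^ 2 / (2 * L) := by
  have hL' : (L : ℝ) ≠ 0 := Nat.cast_ne_zero.mpr hL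
  have hρ : ρ L 0 = L * ((L : ℝ) - 1) / 2 := by linarith [ρ_zero L]
  rw [p, q_zero, hρ]
  field_simp
  ring

-- Where `q L (r²) = 0` both sides are `0` by the convention `x / 0 = 0`.
theorem k₂_div_sq_eq (L : ℕ) {r : ℝ} (hr : r ≠ 0) :
    k₂ L r / r ^ 2 = p L (r ^ 2) / q L (r ^ 2) ^ 3 := by
  have hpow : (1 - r ^ 2) ^ L = 1 - r ^ 2 * q L (r ^ 2) := by
    rw [q, ← one_sub_one_sub_pow]; ring
  have hnum := k₂_numerator_identity (L : ℝ) (r ^ 2) (ρ L (r ^ 2)) (q L (r ^ 2))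
    (geom_sum_one_sub _ _)
  have hk₂ : k₂ L r = r ^ 8 * p L (r ^ 2) / (r ^ 6 * q L (r ^ 2) ^ 3) := by
    rw [k₂, show 3 * L + 2 = L * 3 + 2 by ring, show 2 * L = L * 2 by ring, pow_add, pow_mul,
      pow_mul, hpow, p]
    congr 1
    · linear_combination hnum
    · ring
  rw [hk₂, div_div, show r ^ 6 * q L (r ^ 2) ^ 3 * r ^ 2 = r ^ 8 * q L (r ^ 2) ^ 3 by ring]
  exact mul_div_mul_left _ _ (pow_ne_zero 8 hr)

end K₂

theorem tendsto_k₂_div_sq (L : ℕ) (hL : L ≠ 0) :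
    Tendsto (fun r : ℝ => k₂ L r / r ^ 2) (𝓝[≠] 0) (𝓝 (((L : ℝ) + 1) ^ 2 / (2 * L))) := by
  have hcont : ContinuousAt (fun r : ℝ => K₂.p L (r ^ 2) / K₂.q L (r ^ 2) ^ 3) 0 := by
    refine ContinuousAt.div (by fun_prop) (by fun_prop) ?_
    simp [K₂.q_zero, hL]
  have hlim := hcont.tendsto.mono_left (nhdsWithin_le_nhds (s := {0}ᶜ))
  rw [zero_pow two_ne_zero, K₂.p_zero_div_q_zero_pow L hL] at hlim
  refine hlim.congr' ?_
  filter_upwards [self_mem_nhdsWithin] with r hr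
  exact (K₂.k₂_div_sq_eq L hr).symm

/-- Quadratic repulsion between zeros:
`k₂^{(L)}(r)/r² → (L+1)²/(2L)` as `r → 0⁺`. -/
theorem su11_quadratic_repulsion (L : ℕ) (hL : 1 ≤ L) :
    Filter.Tendsto (fun r : ℝ => k₂ L r / r ^ 2) (nhdsWithin 0 (Set.Ioi 0))
      (nhds (((L : ℝ) + 1) ^ 2 / (2 * L))) :=
  (tendsto_k₂_div_sq L (by omega)).mono_left (nhdsWithin_mono _ fun _ hr => ne_of_gt hr)
end

section
/- Fix integers N ≥ 0 and L ≥ 1. For all complex numbers z, z' with |z| > 1 and |z'| < 1, the following bound holds: | z^{−N} · (C(N+L−1, N))^{−1/2} · ∑_{m=0}^{N} C(L+m−1, m)·(z·conj(z'))^m | ≤ C(N+L, N) · ( max{ |z|^{−1}, |z'| } )^N, where C(·,·) denotes the binomial coefficient. (This estimate shows that the covariance between the inner and outer zeros of the SU(1,1) random polynomial of degree N decays geometrically, so inner and outer zeros become independent as N → ∞.) -/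
/-! By the triangle inequality, the `m`-th term contributes at most
`C(L+m-1, m) ‖z'‖^m ‖z‖^{-(N-m)} ≤ C(L+m-1, m) r^N` with `r = max ‖z‖⁻¹ ‖z'‖`; the coefficients
sum to `C(N+L, N)` by the hockey-stick identity, and the normalisation
`C(N+L-1, N)^{-1/2}` is at most `1`. -/

open ComplexConjugate Finset

theorem Nat.sum_range_choose_add_sub_one (N L : ℕ) (hL : 1 ≤ L) :
    ∑ m ∈ range (N + 1), (L + m - 1).choose m = (N + L).choose N := by
  obtain ⟨k, rfl⟩ := Nat.exists_eq_add_of_le' hL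
  have hdiag (m : ℕ) : (k + 1 + m - 1).choose m = (m + k).choose k := by
    rw [show k + 1 + m - 1 = m + k by omega, Nat.choose_symm_add]
  simp_rw [hdiag, Nat.sum_range_add_choose]
  exact Nat.choose_symm_of_eq_add (by omega)

theorem norm_inv_ofReal_sqrt_le_one {x : ℝ} (hx : 1 ≤ x) : ‖((√x : ℝ) : ℂ)⁻¹‖ ≤ 1 := by
  rw [norm_inv, Complex.norm_real, Real.norm_of_nonneg (Real.sqrt_nonneg x)]
  exact inv_le_one_of_one_le₀ (Real.one_le_sqrt.mpr hx)

theorem mul_pow_mul_inv_pow_le_max_pow {a b : ℝ} (ha : 0 < a) (hb : 0 ≤ b) {m N : ℕ}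
    (hmN : m ≤ N) : (a * b) ^ m * (a ^ N)⁻¹ ≤ max a⁻¹ b ^ N := by
  have hsplit : (a * b) ^ m * (a ^ N)⁻¹ = b ^ m * a⁻¹ ^ (N - m) := by
    rw [inv_pow_sub₀ ha.ne' hmN, mul_pow]
    field_simp
  rw [hsplit, ← Nat.add_sub_cancel' hmN, pow_add, Nat.add_sub_cancel_left]
  exact mul_le_mul (pow_le_pow_left₀ hb (le_max_right _ _) m)
    (pow_le_pow_left₀ (by positivity) (le_max_left _ _) _) (by positivity) (by positivity)

theorem su11_inner_outer_covariance_bound_general (N L : ℕ) (hL : 1 ≤ L) (z z' : ℂ)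
    (hz : 1 < ‖z‖) :
    ‖(z ^ N)⁻¹ * ((Real.sqrt (Nat.choose (N + L - 1) N) : ℂ))⁻¹ *
        ∑ m ∈ Finset.range (N + 1),
          (Nat.choose (L + m - 1) m : ℂ) * (z * conj z') ^ m‖ ≤
      (Nat.choose (N + L) N : ℝ) * max ‖z‖⁻¹ ‖z'‖ ^ N := by
  have hchoose : (1 : ℝ) ≤ (N + L - 1).choose N := mod_cast Nat.choose_pos (by omega)
  rw [norm_mul, norm_mul, norm_inv, norm_pow]
  calc (‖z‖ ^ N)⁻¹ * ‖((√((N + L - 1).choose N : ℝ) : ℝ) : ℂ)⁻¹‖ *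
        ‖∑ m ∈ range (N + 1), ((L + m - 1).choose m : ℂ) * (z * conj z') ^ m‖
      ≤ (‖z‖ ^ N)⁻¹ * 1 *
          ∑ m ∈ range (N + 1), ((L + m - 1).choose m : ℝ) * (‖z‖ * ‖z'‖) ^ m := by
        gcongr
        · exact norm_inv_ofReal_sqrt_le_one hchoose
        · refine (norm_sum_le _ _).trans_eq (sum_congr rfl fun m _ => ?_)
          simp
    _ = ∑ m ∈ range (N + 1),
          ((L + m - 1).choose m : ℝ) * ((‖z‖ * ‖z'‖) ^ m * (‖z‖ ^ N)⁻¹) := by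
        rw [mul_one, mul_sum]
        exact sum_congr rfl fun m _ => by ring
    _ ≤ ∑ m ∈ range (N + 1), ((L + m - 1).choose m : ℝ) * max ‖z‖⁻¹ ‖z'‖ ^ N := by
        gcongr with m hm
        exact mul_pow_mul_inv_pow_le_max_pow (by linarith) (norm_nonneg z')
          (Nat.lt_succ_iff.mp (mem_range.mp hm))
    _ = ((N + L).choose N : ℝ) * max ‖z‖⁻¹ ‖z'‖ ^ N := by
        rw [← sum_mul, ← Nat.cast_sum, Nat.sum_range_choose_add_sub_one N L hL]

/-- The covariance between the inner and outer zeros of the `SU(1,1)` random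
polynomial of degree `N` decays geometrically: for `|z| > 1` and `|z'| < 1`,
`|z^{-N} C(N+L-1, N)^{-1/2} ∑_{m=0}^{N} C(L+m-1, m)(z conj(z'))^m|
  ≤ C(N+L, N) (max{|z|⁻¹, |z'|})^N`. -/
theorem su11_inner_outer_covariance_bound (N L : ℕ) (hL : 1 ≤ L) (z z' : ℂ)
    (hz : 1 < ‖z‖) (hz' : ‖z'‖ < 1) :
    ‖(z ^ N)⁻¹ * ((Real.sqrt (Nat.choose (N + L - 1) N) : ℂ))⁻¹ *
        ∑ m ∈ Finset.range (N + 1),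
          (Nat.choose (L + m - 1) m : ℂ) * (z * conj z') ^ m‖ ≤
      (Nat.choose (N + L) N : ℝ) * max ‖z‖⁻¹ ‖z'‖ ^ N :=
  su11_inner_outer_covariance_bound_general N L hL z z' hz
end
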